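/- arXiv:0908.4293 — 2 statements merged into one kernel-verified Lean document; each statement's English description precedes it below -/
import Mathlib

section
/- Let G be a continuous self-map of a compact metric space Q and let (X_n)_{n≥1} be a sequence of periodic orbits of G with strictly increasing periods π(X_n); let μ_n be the uniform atomic probability measure on X_n. Assume that for every ε > 0 and every m ∈ ℕ there exists a subset X̃_{m,ε} ⊆ X_m such that for every continuous function φ : Q → ℝ there exists N = N(ε,φ) ∈ ℕ such that for all m > N: (1) #X̃_{m,ε}/#X_m > 1 − ε; and (2) for every n with N ≤ n < m and every x ∈ X̃_{m,ε}, |∫ φ dν_{π(X_n)}(x) − ∫ φ dμ_n| < ε. Then the sequence (μ_n) converges in the weak-* topology, and the limit measure is an ergodic G-invariant Borel probability measure. -/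
/-!
The uniform measure `μ_n` on a periodic orbit `X_n` is `G`-invariant, so for every `k > 0` it is
the average of the Birkhoff averages of length `k`: `∫ φ dμ_m = ∫ A_k φ dμ_m`. Taking `k = π(X_n)`,
`∫ φ dμ_m - ∫ φ dμ_n` is the `μ_m`-mean of `A_k φ - ∫ φ dμ_n`, which the hypothesis makes small on
most of `X_m`; hence `(∫ φ dμ_n)` is Cauchy, and by compactness of the space of probability
measures `μ_n` converges weakly to some `μ`, invariant as a weak limit of invariant measures.
Letting `m → ∞` shows `∫ |A_k φ - ∫ φ dμ| dμ → 0`. For an invariant set `s` this gives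
`∫_s φ dμ = μ(s) ∫ φ dμ` for every continuous `φ`, i.e. `μ|_s = μ(s) μ`, so `μ(s) ∈ {0, 1}`.
-/

open MeasureTheory Filter Metric Topology
open scoped ENNReal

/-- The uniform atomic probability measure on a finite set `X`:
`μ_X = (1/#X) ∑_{x ∈ X} δ_x`. -/
noncomputable def unifOrbit {Q : Type*} [MeasurableSpace Q] (X : Finset Q) :
    Measure Q := ((X.card : ℝ≥0∞))⁻¹ • ∑ x ∈ X, Measure.dirac x

/-- The `k`-measure of a point `x`: `ν_k(x) = (1/k) ∑_{i=0}^{k-1} δ_{G^i(x)}`. -/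
noncomputable def nuMeas {Q : Type*} [MeasurableSpace Q] (G : Q → Q) (k : ℕ) (x : Q) :
    Measure Q := ((k : ℝ≥0∞))⁻¹ • ∑ i ∈ Finset.range k, Measure.dirac (G^[i] x)

/-- `X` is a periodic orbit of `G`: the orbit of a periodic point, with period `π(X) = #X`. -/
def IsPeriodicOrbit {Q : Type*} (G : Q → Q) (X : Finset Q) : Prop :=
  0 < X.card ∧ ∃ x : Q, G^[X.card] x = x ∧ (X : Set Q) = {y | ∃ i < X.card, G^[i] x = y}

open BoundedContinuousFunction

lemma Finset.inv_card_mul_sum_le_of_le_on_subset {α : Type*} {s t : Finset α} (hts : t ⊆ s)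
    {g : α → ℝ} {B ε δ : ℝ} (hε : 0 ≤ ε) (hB : 0 ≤ B) (hgs : ∀ x ∈ s, g x ≤ B)
    (hgt : ∀ x ∈ t, g x ≤ ε) (hδ : 1 - δ < (t.card : ℝ) / s.card) :
    (s.card : ℝ)⁻¹ * ∑ x ∈ s, g x ≤ ε + δ * B := by
  classical
  rcases s.eq_empty_or_nonempty with rfl | hs
  · simp only [Finset.card_empty, Nat.cast_zero, div_zero, sub_neg] at hδ
    simp only [Finset.card_empty, Nat.cast_zero, inv_zero, zero_mul]
    positivity
  have hs_pos : (0 : ℝ) < s.card := by exact_mod_cast hs.card_pos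
  have hsplit : ∑ x ∈ s, g x ≤ t.card * ε + (s.card - t.card) * B := by
    rw [← Finset.sum_sdiff hts]
    have hout := Finset.sum_le_card_nsmul (s \ t) g B fun x hx => hgs x (Finset.mem_sdiff.1 hx).1
    have hin := Finset.sum_le_card_nsmul t g ε hgt
    rw [nsmul_eq_mul, Finset.card_sdiff_of_subset hts, Nat.cast_sub (Finset.card_le_card hts)]
      at hout
    rw [nsmul_eq_mul] at hin
    linarith
  have ht_card : (t.card : ℝ) ≤ s.card := by exact_mod_cast Finset.card_le_card hts
  have hδ' : s.card - t.card < δ * s.card := by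
    rw [lt_div_iff₀ hs_pos] at hδ
    linarith
  rw [inv_mul_le_iff₀ hs_pos]
  calc ∑ x ∈ s, g x ≤ t.card * ε + (s.card - t.card) * B := hsplit
    _ ≤ s.card * ε + (δ * s.card) * B := by gcongr
    _ = s.card * (ε + δ * B) := by ring

section UniformMeasure

variable {Q : Type*} [MeasurableSpace Q]

lemma isProbabilityMeasure_unifOrbit {X : Finset Q} (hX : 0 < X.card) :
    IsProbabilityMeasure (unifOrbit X) := by
  constructor
  simp only [unifOrbit, Measure.smul_apply, Measure.finsetSum_apply, measure_univ,
    Finset.sum_const, nsmul_eq_mul, mul_one, smul_eq_mul]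
  exact ENNReal.inv_mul_cancel (by exact_mod_cast hX.ne') (ENNReal.natCast_ne_top _)

variable [MeasurableSingletonClass Q]

lemma integral_unifOrbit (X : Finset Q) (φ : Q → ℝ) :
    ∫ y, φ y ∂(unifOrbit X) = (X.card : ℝ)⁻¹ * ∑ x ∈ X, φ x := by
  rw [unifOrbit, integral_smul_measure, integral_finsetSum_measure]
  · simp [integral_dirac, ENNReal.toReal_inv]
  · exact fun x _ => integrable_dirac (by simp)

lemma integral_nuMeas (G : Q → Q) (k : ℕ) (x : Q) (φ : Q → ℝ) :
    ∫ y, φ y ∂(nuMeas G k x) = birkhoffAverage ℝ G φ k x := by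
  rw [nuMeas, integral_smul_measure, integral_finsetSum_measure]
  · simp [integral_dirac, ENNReal.toReal_inv, birkhoffAverage, birkhoffSum]
  · exact fun i _ => integrable_dirac (by simp)

end UniformMeasure

namespace IsPeriodicOrbit

variable {Q : Type*} {G : Q → Q} {X : Finset Q}

lemma exists_isPeriodicPt_coe_eq_range (hX : IsPeriodicOrbit G X) :
    ∃ x, Function.IsPeriodicPt G X.card x ∧ (X : Set Q) = Set.range fun j => G^[j] x := by
  obtain ⟨hcard, x, hx, hX⟩ := hX
  refine ⟨x, hx, hX.trans (Set.Subset.antisymm ?_ ?_)⟩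
  · rintro _ ⟨i, -, rfl⟩
    exact ⟨i, rfl⟩
  · rintro _ ⟨j, rfl⟩
    exact ⟨j % X.card, Nat.mod_lt _ hcard, Function.IsPeriodicPt.iterate_mod_apply hx j⟩

lemma bijOn (hX : IsPeriodicOrbit G X) : Set.BijOn G X X := by
  obtain ⟨x, hx, hXr⟩ := hX.exists_isPeriodicPt_coe_eq_range
  have hmaps : Set.MapsTo G X X := by
    rw [hXr]
    rintro _ ⟨j, rfl⟩
    exact ⟨j + 1, Function.iterate_succ_apply' G j x⟩
  refine (X.finite_toSet.surjOn_iff_bijOn_of_mapsTo hmaps).1 ?_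
  rw [hXr]
  rintro _ ⟨j, rfl⟩
  refine ⟨G^[j + X.card - 1] x, ⟨_, rfl⟩, ?_⟩
  have hj : 1 ≤ j + X.card := le_add_left hX.1
  rw [← Function.iterate_succ_apply' G, Nat.succ_eq_add_one, Nat.sub_add_cancel hj,
    Function.iterate_add_apply, hx.eq]

variable [MeasurableSpace Q]

lemma map_unifOrbit (hX : IsPeriodicOrbit G X) (hG : Measurable G) :
    (unifOrbit X).map G = unifOrbit X := by
  have hbij := hX.bijOn
  rw [unifOrbit, Measure.map_smul, Measure.map_finset_sum hG.aemeasurable]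
  simp only [Measure.map_dirac' hG]
  congr 1
  exact Finset.sum_nbij G hbij.mapsTo hbij.injOn hbij.surjOn fun _ _ => rfl

lemma measurePreserving_unifOrbit (hX : IsPeriodicOrbit G X) (hG : Measurable G) :
    MeasurePreserving G (unifOrbit X) (unifOrbit X) :=
  ⟨hG, hX.map_unifOrbit hG⟩

end IsPeriodicOrbit

section BirkhoffAverage

variable {α E : Type*} [NormedAddCommGroup E] [NormedSpace ℝ E] {f : α → α} {g : α → E}

lemma norm_birkhoffAverage_le {C : ℝ} (hg : ∀ x, ‖g x‖ ≤ C) (n : ℕ) (x : α) :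
    ‖birkhoffAverage ℝ f g n x‖ ≤ C := by
  rcases Nat.eq_zero_or_pos n with rfl | hn
  · simpa using (norm_nonneg _).trans (hg x)
  calc ‖birkhoffAverage ℝ f g n x‖
      ≤ (n : ℝ)⁻¹ * ∑ i ∈ Finset.range n, ‖g (f^[i] x)‖ := by
        rw [birkhoffAverage, birkhoffSum, norm_smul, norm_inv, Real.norm_natCast]
        gcongr
        exact norm_sum_le _ _
    _ ≤ (n : ℝ)⁻¹ * (n * C) := by
        gcongr
        exact (Finset.sum_le_card_nsmul _ _ C fun i _ => hg _).trans (by simp)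
    _ = C := by field_simp

lemma continuous_birkhoffAverage [TopologicalSpace α] (hf : Continuous f) (hg : Continuous g)
    (n : ℕ) : Continuous (birkhoffAverage ℝ f g n) :=
  (continuous_finsetSum _ fun i _ => hg.comp (hf.iterate i)).const_smul _

variable [MeasurableSpace α] {μ : Measure α}

lemma MeasureTheory.MeasurePreserving.integrable_birkhoffAverage (hf : MeasurePreserving f μ μ)
    (hg : Integrable g μ) (n : ℕ) : Integrable (birkhoffAverage ℝ f g n) μ :=
  (integrable_finsetSum _ fun i _ => (hf.iterate i).integrable_comp_of_integrable hg).smul _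

lemma MeasureTheory.MeasurePreserving.integral_birkhoffAverage [CompleteSpace E]
    (hf : MeasurePreserving f μ μ) (hg : Integrable g μ) {n : ℕ} (hn : n ≠ 0) :
    ∫ x, birkhoffAverage ℝ f g n x ∂μ = ∫ x, g x ∂μ := by
  have hcomp : ∀ i, ∫ x, g (f^[i] x) ∂μ = ∫ x, g x ∂μ := fun i => by
    have hfi := hf.iterate i
    rw [← integral_map hfi.measurable.aemeasurable (by rw [hfi.map_eq]; exact hg.1), hfi.map_eq]
  simp only [birkhoffAverage, birkhoffSum]
  have hint : ∀ i, Integrable (fun x => g (f^[i] x)) μ := fun i =>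
    (hf.iterate i).integrable_comp_of_integrable hg
  rw [integral_smul, integral_finsetSum _ fun i _ => hint i]
  simp only [hcomp, Finset.sum_const, Finset.card_range]
  rw [← Nat.cast_smul_eq_nsmul ℝ, smul_smul, inv_mul_cancel₀ (Nat.cast_ne_zero.2 hn), one_smul]

end BirkhoffAverage

section Ergodicity

variable {Q : Type*} [MeasurableSpace Q] {G : Q → Q} {μ : Measure Q}

lemma MeasureTheory.MeasurePreserving.setIntegral_eq_measureReal_mul_integral [IsFiniteMeasure μ]
    (hG : MeasurePreserving G μ μ) {s : Set Q} (hs : MeasurableSet s) (hGs : G ⁻¹' s = s)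
    {f : Q → ℝ} (hf : Integrable f μ)
    (happrox : ∀ ε > 0, ∃ n ≠ 0, ∫ x, |birkhoffAverage ℝ G f n x - ∫ y, f y ∂μ| ∂μ ≤ ε) :
    ∫ x in s, f x ∂μ = μ.real s * ∫ x, f x ∂μ := by
  have hGs' : MeasurePreserving G (μ.restrict s) (μ.restrict s) := by
    simpa only [hGs] using hG.restrict_preimage hs
  refine eq_of_forall_dist_le fun ε hε => ?_
  obtain ⟨n, hn, hle⟩ := happrox ε hε
  set c := ∫ y, f y ∂μ
  have hA := (hG.integrable_birkhoffAverage hf n).sub (integrable_const c)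
  calc dist (∫ x in s, f x ∂μ) (μ.real s * c)
      = |∫ x in s, (birkhoffAverage ℝ G f n x - c) ∂μ| := by
        rw [integral_sub (hG.integrable_birkhoffAverage hf n).integrableOn
          (integrable_const c).integrableOn, hGs'.integral_birkhoffAverage hf.integrableOn hn,
          setIntegral_const, smul_eq_mul, Real.dist_eq]
    _ ≤ ∫ x in s, |birkhoffAverage ℝ G f n x - c| ∂μ := abs_integral_le_integral_abs
    _ ≤ ∫ x, |birkhoffAverage ℝ G f n x - c| ∂μ :=
        setIntegral_le_integral hA.abs (Eventually.of_forall fun _ => abs_nonneg _)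
    _ ≤ ε := hle

lemma MeasureTheory.Measure.measure_eq_zero_or_one_of_restrict_eq_smul [IsFiniteMeasure μ]
    {s : Set Q}
    (h : μ.restrict s = μ s • μ) : μ s = 0 ∨ μ s = 1 := by
  have hss : μ s * 1 = μ s * μ s := by
    simpa [Measure.restrict_apply_self] using congrArg (fun ν : Measure Q => ν s) h
  rcases eq_or_ne (μ s) 0 with h0 | h0
  · exact Or.inl h0
  · exact Or.inr ((ENNReal.mul_right_inj h0 (measure_ne_top μ s)).1 hss).symm

variable [TopologicalSpace Q] [HasOuterApproxClosed Q] [BorelSpace Q]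

lemma MeasureTheory.Measure.restrict_eq_smul_of_forall_setIntegral_eq [IsFiniteMeasure μ]
    {s : Set Q}
    (h : ∀ f : Q →ᵇ ℝ, ∫ x in s, f x ∂μ = μ.real s * ∫ x, f x ∂μ) :
    μ.restrict s = μ s • μ :=
  have := μ.smul_finite (measure_ne_top μ s)
  ext_of_forall_integral_eq_of_IsFiniteMeasure fun f => by
    rw [integral_smul_measure, h f]
    rfl

theorem MeasureTheory.MeasurePreserving.ergodic_of_forall_integral_abs_birkhoffAverage_sub_le
    [IsProbabilityMeasure μ] (hG : MeasurePreserving G μ μ)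
    (happrox : ∀ f : Q →ᵇ ℝ, ∀ ε > 0,
      ∃ n ≠ 0, ∫ x, |birkhoffAverage ℝ G f n x - ∫ y, f y ∂μ| ∂μ ≤ ε) :
    Ergodic G μ := by
  refine ⟨hG, ⟨fun s hs hGs => ?_⟩⟩
  have hrestrict : μ.restrict s = μ s • μ := Measure.restrict_eq_smul_of_forall_setIntegral_eq
    fun f => hG.setIntegral_eq_measureReal_mul_integral hs hGs (f.integrable μ) (happrox f)
  rw [eventuallyConst_set']
  rcases Measure.measure_eq_zero_or_one_of_restrict_eq_smul hrestrict with h | h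
  · exact Or.inl (ae_eq_empty.2 h)
  · exact Or.inr ((ae_eq_univ_iff_measure_eq hs.nullMeasurableSet).2 (h.trans measure_univ.symm))

end Ergodicity

namespace MeasureTheory.ProbabilityMeasure

variable {Q : Type*} [TopologicalSpace Q] [MeasurableSpace Q] [BorelSpace Q]

lemma exists_tendsto_of_cauchySeq_integral [T2Space Q] [CompactSpace Q]
    {μs : ℕ → ProbabilityMeasure Q} (h : ∀ f : Q →ᵇ ℝ, CauchySeq fun n => ∫ x, f x ∂(μs n)) :
    ∃ μ, Tendsto μs atTop (𝓝 μ) := by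
  obtain ⟨μ, -, hμ⟩ := isCompact_univ.exists_mapClusterPt (f := atTop) (u := μs) (by simp)
  refine ⟨μ, tendsto_iff_forall_integral_tendsto.2 fun f => ?_⟩
  obtain ⟨l, hl⟩ := cauchySeq_tendsto_of_complete (h f)
  have hcluster : MapClusterPt (∫ x, f x ∂μ) atTop fun n => ∫ x, f x ∂(μs n) :=
    hμ.tendsto_comp ((continuous_integral_boundedContinuousFunction f).tendsto μ)
  obtain ⟨ψ, hψ, hlim⟩ := hcluster.tendsto_subseq
  rwa [tendsto_nhds_unique hlim (hl.comp hψ.tendsto_atTop)]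

lemma measurePreserving_of_tendsto [HasOuterApproxClosed Q] {G : Q → Q} (hG : Continuous G)
    {μs : ℕ → ProbabilityMeasure Q} {μ : ProbabilityMeasure Q} (hlim : Tendsto μs atTop (𝓝 μ))
    (hinv : ∀ n, MeasurePreserving G (μs n) (μs n)) : MeasurePreserving G μ μ := by
  have hmap := tendsto_map_of_tendsto_of_continuous μs μ hlim hG
  have hfix : ∀ n, (μs n).map hG.measurable.aemeasurable = μs n := fun n =>
    toMeasure_injective (hinv n).map_eq
  simp only [hfix] at hmap
  exact ⟨hG.measurable, congrArg toMeasure (tendsto_nhds_unique hmap hlim)⟩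

end MeasureTheory.ProbabilityMeasure

section BirkhoffApprox

variable {Q : Type*} [TopologicalSpace Q] [MeasurableSpace Q] [OpensMeasurableSpace Q]
  {G : Q → Q} {μs : ℕ → ProbabilityMeasure Q} {k : ℕ → ℕ}

lemma cauchySeq_integral_of_birkhoffAverage_approx
    (hinv : ∀ n, MeasurePreserving G (μs n) (μs n)) (hk : ∀ n, k n ≠ 0) (f : Q →ᵇ ℝ)
    (happrox : ∀ ε > 0, ∃ N, ∀ n m, N ≤ n → n < m →
      ∫ x, |birkhoffAverage ℝ G f (k n) x - ∫ y, f y ∂(μs n)| ∂(μs m) ≤ ε) :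
    CauchySeq fun n => ∫ x, f x ∂(μs n) := by
  refine Metric.cauchySeq_iff'.2 fun ε hε => ?_
  obtain ⟨N, hN⟩ := happrox (ε / 2) (half_pos hε)
  refine ⟨N, fun m hm => ?_⟩
  rcases hm.eq_or_lt with rfl | hm
  · simpa using hε
  set u := fun n => ∫ x, f x ∂(μs n)
  have hA := (hinv m).integrable_birkhoffAverage (f.integrable (μs m)) (k N)
  calc dist (u m) (u N) = |∫ x, (birkhoffAverage ℝ G f (k N) x - u N) ∂(μs m)| := by
        rw [integral_sub hA (integrable_const _),
          (hinv m).integral_birkhoffAverage (f.integrable _) (hk N), Real.dist_eq]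
        simp [u]
    _ ≤ ∫ x, |birkhoffAverage ℝ G f (k N) x - u N| ∂(μs m) := abs_integral_le_integral_abs
    _ ≤ ε / 2 := hN N m le_rfl hm
    _ < ε := half_lt_self hε

lemma exists_integral_abs_birkhoffAverage_sub_le_of_tendsto [CompactSpace Q]
    (hG : Continuous G) {μ : ProbabilityMeasure Q} (hlim : Tendsto μs atTop (𝓝 μ)) (f : Q →ᵇ ℝ)
    (happrox : ∀ ε > 0, ∃ N, ∀ n m, N ≤ n → n < m →
      ∫ x, |birkhoffAverage ℝ G f (k n) x - ∫ y, f y ∂(μs n)| ∂(μs m) ≤ ε)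
    {ε : ℝ} (hε : 0 < ε) :
    ∃ n, ∫ x, |birkhoffAverage ℝ G f (k n) x - ∫ y, f y ∂μ| ∂μ ≤ ε := by
  have hweak := ProbabilityMeasure.tendsto_iff_forall_integral_tendsto.1 hlim
  obtain ⟨N, hN⟩ := happrox (ε / 2) (half_pos hε)
  obtain ⟨n, hn_close, hNn⟩ := ((hweak f).eventually
    (Metric.closedBall_mem_nhds _ (half_pos hε))).and (eventually_ge_atTop N) |>.exists
  set c := ∫ y, f y ∂μ
  set u := ∫ y, f y ∂(μs n)
  have hA := continuous_birkhoffAverage hG f.continuous (k n)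
  let D : Q →ᵇ ℝ := mkOfCompact ⟨fun x => |birkhoffAverage ℝ G f (k n) x - u|, by fun_prop⟩
  have hD : ∫ x, D x ∂μ ≤ ε / 2 :=
    le_of_tendsto (hweak D) ((eventually_gt_atTop n).mono fun m hm => hN n m hNn hm)
  refine ⟨n, ?_⟩
  calc ∫ x, |birkhoffAverage ℝ G f (k n) x - c| ∂μ ≤ ∫ x, (D x + |u - c|) ∂μ := by
        refine integral_mono ?_ ((D.integrable μ).add (integrable_const _)) fun x => ?_
        · exact ((mkOfCompact ⟨_, hA⟩).integrable μ).sub (integrable_const c) |>.abs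
        · exact abs_sub_le _ _ _
    _ = ∫ x, D x ∂μ + |u - c| := by simp [integral_add (D.integrable μ) (integrable_const _)]
    _ ≤ ε := by
        rw [Real.dist_eq] at hn_close
        linarith

end BirkhoffApprox

lemma integral_unifOrbit_abs_birkhoffAverage_sub_le {Q : Type*} [TopologicalSpace Q]
    [MeasurableSpace Q] [MeasurableSingletonClass Q] {Y Yt : Finset Q} (hYt : Yt ⊆ Y)
    (G : Q → Q) (f : Q →ᵇ ℝ) (k : ℕ) {c δ : ℝ} (hc : |c| ≤ ‖f‖) (hδ : 0 ≤ δ)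
    (hratio : 1 - δ < (Yt.card : ℝ) / Y.card)
    (hclose : ∀ x ∈ Yt, |birkhoffAverage ℝ G f k x - c| < δ) :
    ∫ x, |birkhoffAverage ℝ G f k x - c| ∂(unifOrbit Y) ≤ δ * (1 + 2 * ‖f‖) := by
  have hbound : ∀ x ∈ Y, |birkhoffAverage ℝ G f k x - c| ≤ 2 * ‖f‖ := fun x _ =>
    calc |birkhoffAverage ℝ G f k x - c| ≤ |birkhoffAverage ℝ G f k x| + |c| := abs_sub _ _
      _ ≤ ‖f‖ + ‖f‖ := add_le_add (norm_birkhoffAverage_le f.norm_coe_le_norm k x) hc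
      _ = 2 * ‖f‖ := by ring
  rw [integral_unifOrbit]
  calc _ ≤ δ + δ * (2 * ‖f‖) := Finset.inv_card_mul_sum_le_of_le_on_subset hYt hδ
        (by positivity) hbound (fun x hx => (hclose x hx).le) hratio
    _ = δ * (1 + 2 * ‖f‖) := by ring

theorem stmt0_general {Q : Type*} [MetricSpace Q] [CompactSpace Q]
    [MeasurableSpace Q] [BorelSpace Q]
    (G : Q → Q) (hG : Continuous G)
    (X : ℕ → Finset Q) (hXper : ∀ n, IsPeriodicOrbit G (X n))
    (H : ∀ ε : ℝ, 0 < ε → ∃ Xt : ℕ → Finset Q, (∀ m, Xt m ⊆ X m) ∧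
      ∀ φ : C(Q, ℝ), ∃ N : ℕ, ∀ m, N < m →
        (1 - ε < ((Xt m).card : ℝ) / ((X m).card : ℝ)) ∧
        (∀ n, N ≤ n → n < m → ∀ x ∈ Xt m,
          |(∫ y, φ y ∂(nuMeas G (X n).card x)) - ∫ y, φ y ∂(unifOrbit (X n))| < ε)) :
    ∃ μ : Measure Q, IsProbabilityMeasure μ ∧
      (∀ φ : C(Q, ℝ),
        Tendsto (fun n => ∫ y, φ y ∂(unifOrbit (X n))) atTop (𝓝 (∫ y, φ y ∂μ))) ∧
      Ergodic G μ := by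
  let μs : ℕ → ProbabilityMeasure Q := fun n =>
    ⟨unifOrbit (X n), isProbabilityMeasure_unifOrbit (hXper n).1⟩
  have hinv : ∀ n, MeasurePreserving G (μs n) (μs n) := fun n =>
    (hXper n).measurePreserving_unifOrbit hG.measurable
  have hk : ∀ n, (X n).card ≠ 0 := fun n => (hXper n).1.ne'
  have happrox : ∀ f : Q →ᵇ ℝ, ∀ ε > 0, ∃ N, ∀ n m, N ≤ n → n < m →
      ∫ x, |birkhoffAverage ℝ G f (X n).card x - ∫ y, f y ∂(μs n)| ∂(μs m) ≤ ε := by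
    intro f ε hε
    obtain ⟨Xt, hXt, hN⟩ := H (ε / (1 + 2 * ‖f‖)) (by positivity)
    obtain ⟨N, hN⟩ := hN f.toContinuousMap
    refine ⟨N, fun n m hn hm => ?_⟩
    obtain ⟨hratio, hclose⟩ := hN m (by omega)
    calc _ ≤ ε / (1 + 2 * ‖f‖) * (1 + 2 * ‖f‖) :=
          integral_unifOrbit_abs_birkhoffAverage_sub_le (hXt m) G f _
            (f.norm_integral_le_norm _) (by positivity) hratio
            fun x hx => by rw [← integral_nuMeas]; exact hclose n hn hm x hx
      _ = ε := div_mul_cancel₀ ε (by positivity)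
  obtain ⟨μ, hlim⟩ := ProbabilityMeasure.exists_tendsto_of_cauchySeq_integral fun f =>
    cauchySeq_integral_of_birkhoffAverage_approx hinv hk f (happrox f)
  refine ⟨μ, inferInstance, fun φ =>
    ProbabilityMeasure.tendsto_iff_forall_integral_tendsto.1 hlim (mkOfCompact φ), ?_⟩
  refine (ProbabilityMeasure.measurePreserving_of_tendsto hG hlim hinv
    ).ergodic_of_forall_integral_abs_birkhoffAverage_sub_le fun f ε hε => ?_
  obtain ⟨n, hn⟩ :=
    exists_integral_abs_birkhoffAverage_sub_le_of_tendsto hG hlim f (happrox f) hε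
  exact ⟨_, hk n, hn⟩

/-- Lemma 2.2 (`ergodicitylemma`): if the periodic orbits `X_n` (with increasing periods)
satisfy the two approximation conditions, then the uniform measures `μ_n` on `X_n`
converge in the weak-* topology, and the limit measure is an ergodic `G`-invariant
Borel probability measure. -/
theorem stmt0 {Q : Type*} [MetricSpace Q] [CompactSpace Q]
    [MeasurableSpace Q] [BorelSpace Q]
    (G : Q → Q) (hG : Continuous G)
    (X : ℕ → Finset Q) (hXper : ∀ n, IsPeriodicOrbit G (X n))
    (hXmono : StrictMono fun n => (X n).card)
    (H : ∀ ε : ℝ, 0 < ε → ∃ Xt : ℕ → Finset Q, (∀ m, Xt m ⊆ X m) ∧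
      ∀ φ : C(Q, ℝ), ∃ N : ℕ, ∀ m, N < m →
        (1 - ε < ((Xt m).card : ℝ) / ((X m).card : ℝ)) ∧
        (∀ n, N ≤ n → n < m → ∀ x ∈ Xt m,
          |(∫ y, φ y ∂(nuMeas G (X n).card x)) - ∫ y, φ y ∂(unifOrbit (X n))| < ε)) :
    ∃ μ : Measure Q, IsProbabilityMeasure μ ∧
      (∀ φ : C(Q, ℝ),
        Tendsto (fun n => ∫ y, φ y ∂(unifOrbit (X n))) atTop (𝓝 (∫ y, φ y ∂μ))) ∧
      Ergodic G μ :=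
  stmt0_general G hG X hXper H
end

section
/- Let G be a continuous self-map of a compact metric space Q and let (X_n)_{n≥1} be a sequence of periodic orbits of G with strictly increasing periods π(X_n); let μ_n be the uniform atomic probability measure on X_n. Assume there are sequences (γ_n)_{n≥1} with γ_n > 0 and (κ_n)_{n≥1} with κ_n ∈ (0,1] such that for each n the orbit X_{n+1} is a (γ_n, κ_n)-good approximation of X_n, Σ_{n=1}^∞ γ_n < ∞, and ∏_{n=1}^∞ κ_n > 0, and let μ be the weak-* limit of (μ_n). Set r_n = Σ_{k=n}^∞ γ_k. Then for every n and every point x ∈ X_n one has μ(closure(B(x, r_n))) ≥ (∏_{k=n}^∞ κ_k) · (1/π(X_n)) > 0, where B(x, r) denotes the open ball of radius r centered at x. -/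
open MeasureTheory Filter Metric Topology
open scoped ENNReal

/-- `Y` is a `(γ, κ)`-good approximation of `X` (both periodic orbits of `G`). -/
def GoodApprox {Q : Type*} [MetricSpace Q] (G : Q → Q) (γ κ : ℝ) (Y X : Finset Q) : Prop :=
  ∃ (Γ : Finset Q) (ρ : Q → Q),
    Γ ⊆ Y ∧ (∀ y ∈ Γ, ρ y ∈ X) ∧
    (∀ y ∈ Γ, ∀ j < X.card, dist (G^[j] y) (G^[j] (ρ y)) < γ) ∧
    κ ≤ (Γ.card : ℝ) / (Y.card : ℝ) ∧
    ∃ c : ℕ, ∀ x ∈ X, Set.ncard {y : Q | y ∈ Γ ∧ ρ y = x} = c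

/-!
The fibres of `ρ : Γ → X_n` all have the same size, so `ρ` pulls the proportion of `X_n` lying in
a closed ball back to a proportion of `X_{n+1}` at least `κ_n` times as large in the ball enlarged
by `γ_n`. Iterating from the single point `x ∈ X_n`, `μ_{n+m}` gives the closed ball of radius
`∑_{k<m} γ_{n+k} < r_n` mass at least `(∏_{k<m} κ_{n+k}) / π(X_n)`, and the portmanteau
inequality for the closed set `closure (ball x r_n)` passes this bound to the weak limit `μ`.
The infinite product is positive because `∑ log κ_k` converges.
-/

open Finset

open scoped Classical in
lemma unifOrbit_apply {Q : Type*} [MeasurableSpace Q] (X : Finset Q) {S : Set Q}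
    (hS : MeasurableSet S) :
    unifOrbit X S = ENNReal.ofReal ((#{y ∈ X | y ∈ S} : ℝ) / #X) := by
  rcases (#X).eq_zero_or_pos with hX | hX
  · simp [card_eq_zero.1 hX, unifOrbit]
  rw [ENNReal.ofReal_div_of_pos (by exact_mod_cast hX), unifOrbit, Measure.smul_apply,
    Measure.finsetSum_apply]
  simp only [Measure.dirac_apply' _ hS, Set.indicator_apply, Pi.one_apply, sum_boole,
    ENNReal.ofReal_natCast, smul_eq_mul]
  rw [ENNReal.div_eq_inv_mul]

instance isFiniteMeasure_unifOrbit {Q : Type*} [MeasurableSpace Q] (X : Finset Q) :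
    IsFiniteMeasure (unifOrbit X) := by
  refine ⟨?_⟩
  rw [unifOrbit_apply X MeasurableSet.univ]
  exact ENNReal.ofReal_lt_top

lemma Real.hasSum_log_of_tendsto_prod_range {κ : ℕ → ℝ} {P : ℝ} (hκ : ∀ k, κ k ∈ Set.Ioc 0 1)
    (hP : 0 < P) (h : Tendsto (fun n => ∏ k ∈ range n, κ k) atTop (𝓝 P)) :
    HasSum (fun k => Real.log (κ k)) (Real.log P) := by
  have hneg : HasSum (fun k => -Real.log (κ k)) (-Real.log P) := by
    refine (hasSum_iff_tendsto_nat_of_nonneg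
      (fun k => neg_nonneg.2 (Real.log_nonpos (hκ k).1.le (hκ k).2)) _).2 ?_
    have hlog := ((Real.continuousAt_log hP.ne').tendsto.comp h).neg
    refine hlog.congr fun n => ?_
    simp [Real.log_prod (fun k _ => (hκ k).1.ne'), sum_neg_distrib]
  simpa using hneg.neg

lemma Real.exists_hasProd_nat_add_pos {κ : ℕ → ℝ} {P : ℝ} (hκ : ∀ k, κ k ∈ Set.Ioc 0 1)
    (hP : 0 < P) (h : Tendsto (fun n => ∏ k ∈ range n, κ k) atTop (𝓝 P)) (n : ℕ) :
    ∃ T, 0 < T ∧ HasProd (fun k => κ (n + k)) T := by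
  have hlog : Summable fun k => Real.log (κ (n + k)) :=
    (summable_nat_add_iff n).2 (Real.hasSum_log_of_tendsto_prod_range hκ hP h).summable
      |>.congr fun k => by rw [add_comm]
  exact ⟨_, Real.exp_pos _, Real.hasProd_of_hasSum_log (fun k => (hκ _).1) hlog.hasSum⟩

lemma sum_range_lt_tsum_of_pos {f : ℕ → ℝ} (hf : ∀ k, 0 < f k) (hsum : Summable f) (m : ℕ) :
    ∑ k ∈ range m, f k < ∑' k, f k :=
  calc ∑ k ∈ range m, f k < ∑ k ∈ range (m + 1), f k := by
        rw [sum_range_succ]; linarith [hf m]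
    _ ≤ ∑' k, f k := hsum.sum_le_tsum _ fun k _ => (hf k).le

lemma card_filter_apply_mem_eq_mul {α β : Type*} [DecidableEq β] (Γ : Finset α) (ρ : α → β)
    (A : Finset β) {c : ℕ} (hc : ∀ a ∈ A, #{y ∈ Γ | ρ y = a} = c) :
    #{y ∈ Γ | ρ y ∈ A} = #A * c := by
  rw [card_eq_sum_card_fiberwise (s := {y ∈ Γ | ρ y ∈ A}) (t := A)
      fun y hy => (mem_filter.1 hy).2, ← sum_const_nat fun a ha => hc a ha]
  refine sum_congr rfl fun a ha => ?_
  rw [filter_filter]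
  congr 1
  exact filter_congr fun y _ => ⟨fun h => h.2, fun h => ⟨h ▸ ha, h⟩⟩

open scoped Classical in
lemma GoodApprox.mul_div_card_le {Q : Type*} [MetricSpace Q] {G : Q → Q} {γ κ : ℝ}
    {Y X : Finset Q} (h : GoodApprox G γ κ Y X) (x : Q) (s : ℝ) :
    κ * ((#{z ∈ X | z ∈ closedBall x s} : ℝ) / #X) ≤
      (#{y ∈ Y | y ∈ closedBall x (s + γ)} : ℝ) / #Y := by
  rcases (#X).eq_zero_or_pos with hX | hX
  · simp only [hX, CharP.cast_eq_zero, div_zero, mul_zero]; positivity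
  obtain ⟨Γ, ρ, hΓY, hρX, hdist, hκ, c, hfib⟩ := h
  have hfib' : ∀ a ∈ X, #{y ∈ Γ | ρ y = a} = c := fun a ha => by
    rw [← hfib a ha, ← Set.ncard_coe_finset, coe_filter]
  set A := {z ∈ X | z ∈ closedBall x s}
  have hΓ : #Γ = #X * c := by
    simpa [filter_true_of_mem hρX] using card_filter_apply_mem_eq_mul Γ ρ X hfib'
  have hB : #{y ∈ Γ | ρ y ∈ A} = #A * c :=
    card_filter_apply_mem_eq_mul Γ ρ A fun a ha => hfib' a (mem_filter.1 ha).1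
  have hsub : {y ∈ Γ | ρ y ∈ A} ⊆ {y ∈ Y | y ∈ closedBall x (s + γ)} := by
    intro y hy
    obtain ⟨hyΓ, hρy⟩ := mem_filter.1 hy
    refine mem_filter.2 ⟨hΓY hyΓ, ?_⟩
    have hd : dist y (ρ y) < γ := by simpa using hdist y hyΓ 0 hX
    have hρ : dist (ρ y) x ≤ s := (mem_filter.1 hρy).2
    rw [mem_closedBall]
    linarith [dist_triangle y (ρ y) x]
  calc κ * ((#A : ℝ) / #X) ≤ (#Γ / #Y) * ((#A : ℝ) / #X) := by gcongr
    _ = (#{y ∈ Γ | ρ y ∈ A} : ℝ) / #Y := by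
      rw [hΓ, hB]; push_cast; field_simp
    _ ≤ _ := by gcongr

open scoped Classical in
lemma prod_div_card_le_of_goodApprox {Q : Type*} [MetricSpace Q] {G : Q → Q}
    {X : ℕ → Finset Q} {γ κ : ℕ → ℝ} (hκ : ∀ n, 0 ≤ κ n)
    (h : ∀ n, GoodApprox G (γ n) (κ n) (X (n + 1)) (X n))
    {x : Q} (hx : x ∈ X 0) (m : ℕ) :
    (∏ k ∈ range m, κ k) / #(X 0) ≤
      (#{y ∈ X m | y ∈ closedBall x (∑ k ∈ range m, γ k)} : ℝ) / #(X m) := by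
  induction m with
  | zero =>
    have hball_pos : 0 < #{y ∈ X 0 | y ∈ closedBall x 0} := card_pos.2 ⟨x, by simp [hx]⟩
    simp only [prod_range_zero, sum_range_zero]
    gcongr
    exact_mod_cast hball_pos
  | succ m ih =>
    rw [prod_range_succ, sum_range_succ, mul_comm, mul_div_assoc]
    exact (mul_le_mul_of_nonneg_left ih (hκ m)).trans ((h m).mul_div_card_le x _)

lemma FiniteMeasure.le_measure_of_tendsto_of_isClosed {Ω ι : Type*} [MeasurableSpace Ω]
    [TopologicalSpace Ω] [OpensMeasurableSpace Ω] [HasOuterApproxClosed Ω] {l : Filter ι}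
    [l.NeBot] {μs : ι → FiniteMeasure Ω} {μ : FiniteMeasure Ω} (hμ : Tendsto μs l (𝓝 μ))
    {F : Set Ω} (hF : IsClosed F) {b : ι → ℝ≥0∞} {L : ℝ≥0∞} (hb : Tendsto b l (𝓝 L))
    (hle : ∀ i, b i ≤ (μs i : Measure Ω) F) : L ≤ (μ : Measure Ω) F :=
  calc L = l.liminf b := hb.liminf_eq.symm
    _ ≤ l.liminf fun i => (μs i : Measure Ω) F := liminf_le_liminf (.of_forall hle)
    _ ≤ l.limsup fun i => (μs i : Measure Ω) F := liminf_le_limsup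
    _ ≤ (μ : Measure Ω) F := FiniteMeasure.limsup_measure_closed_le_of_tendsto hμ hF

theorem stmt3_general {Q : Type*} [MetricSpace Q]
    [MeasurableSpace Q] [BorelSpace Q]
    (G : Q → Q)
    (X : ℕ → Finset Q)
    (γ : ℕ → ℝ) (hγ : ∀ n, 0 < γ n)
    (κ : ℕ → ℝ) (hκ : ∀ n, κ n ∈ Set.Ioc (0 : ℝ) 1)
    (h1 : ∀ n, GoodApprox G (γ n) (κ n) (X (n + 1)) (X n))
    (h2 : Summable γ)
    (h3 : ∃ P : ℝ, 0 < P ∧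
      Tendsto (fun n => ∏ k ∈ Finset.range n, κ k) atTop (𝓝 P))
    (μ : Measure Q) (hμprob : IsProbabilityMeasure μ)
    (hμlim : ∀ φ : C(Q, ℝ),
      Tendsto (fun n => ∫ y, φ y ∂(unifOrbit (X n))) atTop (𝓝 (∫ y, φ y ∂μ)))
    (r : ℕ → ℝ) (hr : ∀ n, r n = ∑' k : ℕ, γ (n + k)) :
    ∀ n : ℕ, ∀ x ∈ X n,
      ENNReal.ofReal ((∏' k : ℕ, κ (n + k)) * (1 / ((X n).card : ℝ))) ≤
          μ (closure (Metric.ball x (r n))) ∧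
        0 < μ (closure (Metric.ball x (r n))) := by
  intro n x hx
  obtain ⟨P, hP, hprod⟩ := h3
  obtain ⟨T, hT, hTprod⟩ := Real.exists_hasProd_nat_add_pos hκ hP hprod n
  have hradius (m : ℕ) : ∑ k ∈ range m, γ (n + k) < r n :=
    hr n ▸ sum_range_lt_tsum_of_pos (fun k => hγ _)
      (((summable_nat_add_iff n).2 h2).congr fun k => by rw [add_comm]) m
  have hbound (m : ℕ) : ENNReal.ofReal ((∏ k ∈ range m, κ (n + k)) / #(X n)) ≤
      unifOrbit (X (n + m)) (closure (ball x (r n))) :=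
    calc _ ≤ _ := ENNReal.ofReal_le_ofReal <|
          prod_div_card_le_of_goodApprox (X := fun k => X (n + k)) (fun k => (hκ _).1.le)
            (fun k => h1 (n + k)) hx m
      _ = _ := (unifOrbit_apply _ measurableSet_closedBall).symm
      _ ≤ _ := measure_mono ((closedBall_subset_ball (hradius m)).trans subset_closure)
  let νs : ℕ → FiniteMeasure Q := fun m => ⟨unifOrbit (X (n + m)), inferInstance⟩
  let ν : FiniteMeasure Q := ⟨μ, inferInstance⟩
  have hconv : Tendsto νs atTop (𝓝 ν) :=
    FiniteMeasure.tendsto_iff_forall_integral_tendsto.2 fun f =>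
      (hμlim f.toContinuousMap).comp <| (tendsto_add_atTop_nat n).congr fun m => add_comm m n
  have hmain := FiniteMeasure.le_measure_of_tendsto_of_isClosed hconv isClosed_closure
    (ENNReal.tendsto_ofReal (hTprod.tendsto_prod_nat.div_const _)) hbound
  rw [hTprod.tprod_eq, mul_one_div]
  refine ⟨hmain, (ENNReal.ofReal_pos.2 (div_pos hT ?_)).trans_le hmain⟩
  exact_mod_cast card_pos.2 ⟨x, hx⟩

/-- Lemma 2.6 (`l.m`): under the hypotheses of Lemma 2.5, with `μ` the weak-* limit of
the uniform measures `μ_n` on the orbits `X_n`, setting `r_n = ∑_{k ≥ n} γ_k` one has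
`μ(closure(B(x, r_n))) ≥ (∏_{k ≥ n} κ_k) · (1/π(X_n)) > 0` for every `x ∈ X_n`. -/
theorem stmt3 {Q : Type*} [MetricSpace Q] [CompactSpace Q]
    [MeasurableSpace Q] [BorelSpace Q]
    (G : Q → Q) (hG : Continuous G)
    (X : ℕ → Finset Q) (hXper : ∀ n, IsPeriodicOrbit G (X n))
    (hXmono : StrictMono fun n => (X n).card)
    (γ : ℕ → ℝ) (hγ : ∀ n, 0 < γ n)
    (κ : ℕ → ℝ) (hκ : ∀ n, κ n ∈ Set.Ioc (0 : ℝ) 1)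
    (h1 : ∀ n, GoodApprox G (γ n) (κ n) (X (n + 1)) (X n))
    (h2 : Summable γ)
    (h3 : ∃ P : ℝ, 0 < P ∧
      Tendsto (fun n => ∏ k ∈ Finset.range n, κ k) atTop (𝓝 P))
    (μ : Measure Q) (hμprob : IsProbabilityMeasure μ)
    (hμlim : ∀ φ : C(Q, ℝ),
      Tendsto (fun n => ∫ y, φ y ∂(unifOrbit (X n))) atTop (𝓝 (∫ y, φ y ∂μ)))
    (r : ℕ → ℝ) (hr : ∀ n, r n = ∑' k : ℕ, γ (n + k)) :
    ∀ n : ℕ, ∀ x ∈ X n,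
      ENNReal.ofReal ((∏' k : ℕ, κ (n + k)) * (1 / ((X n).card : ℝ))) ≤
          μ (closure (Metric.ball x (r n))) ∧
        0 < μ (closure (Metric.ball x (r n))) :=
  stmt3_general G X γ hγ κ hκ h1 h2 h3 μ hμprob hμlim r hr
end
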